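/- For every natural number k, I_{2k+1, 2k} = ∫_0^∞ f_{2k+1}(x) f_{2k}(x) dx = -(1/2) · ((2k)!)^2. -/

import Mathlib

/-!
On the real line `1 / (1 + x ^ 2) = Re (I / (x + I))`, so the `n`-th derivative is the real part of
`(-1) ^ n * n! * I / (x + I) ^ (n + 1)`; this is `O(n! / |x + I|)`, which makes `f_{m} f_{n}`
integrable and `f_n` vanish at infinity. Since `f_{n+1} f_n = (f_n ^ 2 / 2)'`, the integral over
`(0, ∞)` is `-f_n(0) ^ 2 / 2`, and `f_{2k}(0) = (-1) ^ k (2k)!`.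
-/

open Complex MeasureTheory Filter Set Topology

theorem integral_Ioi_deriv_mul_self {g g' : ℝ → ℝ} {a : ℝ}
    (hg : ∀ x ∈ Ici a, HasDerivAt g (g' x) x) (hint : IntegrableOn (fun x => g' x * g x) (Ioi a))
    (hlim : Tendsto g atTop (𝓝 0)) :
    ∫ x in Ioi a, g' x * g x = -(g a ^ 2 / 2) := by
  have hsq : Tendsto (fun x => g x ^ 2 / 2) atTop (𝓝 0) := by
    simpa using (hlim.pow 2).div_const 2
  rw [integral_Ioi_of_hasDerivAt_of_tendsto' (fun x hx => ?_) hint hsq, zero_sub]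
  exact (((hg x hx).pow 2).div_const 2).congr_deriv (by ring)

lemma ofReal_add_I_ne_zero (x : ℝ) : (x : ℂ) + I ≠ 0 := by
  intro h
  simpa using congrArg im h

lemma norm_ofReal_add_I_sq (x : ℝ) : ‖(x : ℂ) + I‖ ^ 2 = 1 + x ^ 2 := by
  rw [Complex.sq_norm, normSq_apply]
  simp only [add_re, ofReal_re, I_re, add_zero, add_im, ofReal_im, I_im, zero_add, mul_one]
  ring

lemma one_le_norm_ofReal_add_I (x : ℝ) : 1 ≤ ‖(x : ℂ) + I‖ := by
  simpa using abs_im_le_norm ((x : ℂ) + I)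

lemma abs_le_norm_ofReal_add_I (x : ℝ) : |x| ≤ ‖(x : ℂ) + I‖ := by
  simpa using abs_re_le_norm ((x : ℂ) + I)

/-- The `n`-th complex derivative of `z ↦ I / (z + I)`. -/
noncomputable def lorentzDeriv (n : ℕ) (z : ℂ) : ℂ :=
  (-1) ^ n * n.factorial * I * (z + I) ^ (-(n + 1) : ℤ)

lemma hasDerivAt_lorentzDeriv (n : ℕ) (x : ℝ) :
    HasDerivAt (lorentzDeriv n) (lorentzDeriv (n + 1) x) x := by
  have hpow : HasDerivAt (fun z => (z + I) ^ (-(n + 1) : ℤ))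
      ((-(n + 1) : ℤ) * ((x : ℂ) + I) ^ (-(n + 1) - 1 : ℤ)) x :=
    (hasDerivAt_zpow _ _ (.inl (ofReal_add_I_ne_zero x))).comp_add_const _ _
  refine (hpow.const_mul ((-1) ^ n * (n.factorial : ℂ) * I)).congr_deriv ?_
  rw [lorentzDeriv, show (-(n + 1) : ℤ) - 1 = -((n + 1 : ℕ) + 1 : ℤ) by push_cast; ring]
  push_cast [pow_succ, Nat.factorial_succ]
  ring

lemma iteratedDeriv_one_div_one_add_sq (n : ℕ) :
    iteratedDeriv n (fun x : ℝ => 1 / (1 + x ^ 2)) = fun x : ℝ => (lorentzDeriv n x).re := by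
  induction n with
  | zero =>
    funext x
    have h : lorentzDeriv 0 x = I * ((x : ℂ) + I)⁻¹ := by simp [lorentzDeriv]
    rw [iteratedDeriv_zero, h]
    simp only [one_div, mul_re, I_re, inv_re, add_re, ofReal_re, add_zero, normSq_apply, add_im,
      ofReal_im, I_im, zero_add, mul_one, zero_mul, inv_im, one_mul, zero_sub]
    ring
  | succ n ih =>
    funext x
    rw [iteratedDeriv_succ, ih]
    exact (hasDerivAt_lorentzDeriv n x).real_of_complex.deriv

lemma norm_lorentzDeriv (n : ℕ) (x : ℝ) :
    ‖lorentzDeriv n x‖ = n.factorial * (‖(x : ℂ) + I‖ ^ (n + 1))⁻¹ := by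
  rw [lorentzDeriv, show (-(n + 1) : ℤ) = -((n + 1 : ℕ) : ℤ) by push_cast; ring, zpow_neg,
    zpow_natCast]
  simp

lemma norm_lorentzDeriv_le (n : ℕ) (x : ℝ) :
    ‖lorentzDeriv n x‖ ≤ n.factorial * ‖(x : ℂ) + I‖⁻¹ := by
  have h := one_le_norm_ofReal_add_I x
  rw [norm_lorentzDeriv]
  gcongr
  exact le_self_pow₀ h n.succ_ne_zero

lemma abs_lorentzDeriv_re_mul_le (m n : ℕ) (x : ℝ) :
    |(lorentzDeriv m x).re * (lorentzDeriv n x).re|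
      ≤ m.factorial * n.factorial * (1 + x ^ 2)⁻¹ := by
  have hinv : ‖(x : ℂ) + I‖⁻¹ * ‖(x : ℂ) + I‖⁻¹ = (1 + x ^ 2)⁻¹ := by
    rw [← mul_inv, ← sq, norm_ofReal_add_I_sq]
  calc |(lorentzDeriv m x).re * (lorentzDeriv n x).re|
      = |(lorentzDeriv m x).re| * |(lorentzDeriv n x).re| := abs_mul _ _
    _ ≤ (m.factorial * ‖(x : ℂ) + I‖⁻¹) * (n.factorial * ‖(x : ℂ) + I‖⁻¹) := by
      gcongr
      · exact (abs_re_le_norm _).trans (norm_lorentzDeriv_le m x)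
      · exact (abs_re_le_norm _).trans (norm_lorentzDeriv_le n x)
    _ = m.factorial * n.factorial * (1 + x ^ 2)⁻¹ := by rw [← hinv]; ring

lemma continuous_lorentzDeriv_re (n : ℕ) : Continuous fun x : ℝ => (lorentzDeriv n x).re :=
  continuous_iff_continuousAt.2 fun x => (hasDerivAt_lorentzDeriv n x).real_of_complex.continuousAt

lemma integrable_lorentzDeriv_re_mul (m n : ℕ) :
    Integrable fun x : ℝ => (lorentzDeriv m x).re * (lorentzDeriv n x).re :=
  (integrable_inv_one_add_sq.const_mul _).mono'
    ((continuous_lorentzDeriv_re m).mul (continuous_lorentzDeriv_re n)).aestronglyMeasurable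
    (.of_forall (abs_lorentzDeriv_re_mul_le m n))

lemma tendsto_lorentzDeriv_re_atTop (n : ℕ) :
    Tendsto (fun x : ℝ => (lorentzDeriv n x).re) atTop (𝓝 0) := by
  refine squeeze_zero_norm (fun x => (abs_re_le_norm _).trans (norm_lorentzDeriv_le n x)) ?_
  have h : Tendsto (fun x : ℝ => ‖(x : ℂ) + I‖) atTop atTop :=
    tendsto_atTop_mono (fun x => (le_abs_self x).trans (abs_le_norm_ofReal_add_I x)) tendsto_id
  simpa using (tendsto_inv_atTop_zero.comp h).const_mul (n.factorial : ℝ)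

lemma lorentzDeriv_two_mul_zero (k : ℕ) :
    lorentzDeriv (2 * k) (0 : ℝ) = ((-1) ^ k * (2 * k).factorial : ℝ) := by
  have hI : I ^ (-((2 * k : ℕ) + 1) : ℤ) = (-1) ^ k * -I := by
    rw [show (-((2 * k : ℕ) + 1) : ℤ) = -((2 * k + 1 : ℕ) : ℤ) by push_cast; ring, zpow_neg,
      zpow_natCast, pow_succ, pow_mul, I_sq, mul_inv, inv_I, ← inv_pow, inv_neg, inv_one]
  rw [lorentzDeriv, ofReal_zero, zero_add, hI, pow_mul]
  push_cast
  linear_combination (-((2 * k).factorial : ℂ) * (-1) ^ k) * I_sq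

theorem stmt_17 (f : ℝ → ℝ) (hf : ∀ x : ℝ, f x = 1 / (1 + x ^ 2)) (k : ℕ) :
    ∫ x in Set.Ioi (0 : ℝ), iteratedDeriv (2 * k + 1) f x * iteratedDeriv (2 * k) f x
      = -(1 / 2) * ((2 * k).factorial : ℝ) ^ 2 := by
  obtain rfl : f = fun x => 1 / (1 + x ^ 2) := funext hf
  simp only [iteratedDeriv_one_div_one_add_sq]
  rw [integral_Ioi_deriv_mul_self (fun x _ => (hasDerivAt_lorentzDeriv _ x).real_of_complex)
    (integrable_lorentzDeriv_re_mul _ _).integrableOn (tendsto_lorentzDeriv_re_atTop _),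
    lorentzDeriv_two_mul_zero, ofReal_re, mul_pow, ← pow_mul, pow_mul', neg_one_sq, one_pow]
  ring
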